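/- arXiv:2306.13853 — 8 statements merged into one kernel-verified Lean document; each statement's English description precedes it below -/
import Mathlib

section
/- Under the mirror descent update ∇ψ(w_{t+1}) = ∇ψ(w_t) − η∇L(w_t), if ψ − ηL is convex and L is convex (both differentiable), then L(w_{t+1}) ≤ L(w_t). -/
open RealInnerProductSpace

/-! The map `φ = ψ - η L` is convex, so its gradient `∇ψ - η ∇L` is monotone. The update rule makes
`∇φ(w_{t+1}) - ∇φ(w_t) = -η ∇L(w_{t+1})`, hence monotonicity gives
`⟪∇L(w_{t+1}), w_{t+1} - w_t⟫ ≤ 0`, and the tangent inequality for the convex `L` at `w_{t+1}`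
yields `L(w_{t+1}) ≤ L(w_t)`. -/

namespace HasGradientAt

variable {F : Type*} [NormedAddCommGroup F] [InnerProductSpace ℝ F] [CompleteSpace F]
  {f g : F → ℝ} {f' g' x : F}

theorem sub (hf : HasGradientAt f f' x) (hg : HasGradientAt g g' x) :
    HasGradientAt (fun y => f y - g y) (f' - g') x := by
  rw [hasGradientAt_iff_hasFDerivAt] at *
  rw [map_sub]
  exact hf.sub hg

theorem const_mul (c : ℝ) (hf : HasGradientAt f f' x) :
    HasGradientAt (fun y => c * f y) (c • f') x := by
  rw [hasGradientAt_iff_hasFDerivAt] at *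
  rw [map_smul]
  exact hf.const_smul c

end HasGradientAt

namespace ConvexOn

theorem add_apply_sub_le_of_hasFDerivAt {E : Type*} [NormedAddCommGroup E] [NormedSpace ℝ E]
    {s : Set E} {f : E → ℝ} {f' : E →L[ℝ] ℝ} {x y : E}
    (hf : ConvexOn ℝ s f) (hx : x ∈ s) (hy : y ∈ s) (hf' : HasFDerivAt f f' x) :
    f x + f' (y - x) ≤ f y := by
  set ℓ : ℝ →ᵃ[ℝ] E := AffineMap.lineMap x y
  have hline : ConvexOn ℝ (ℓ ⁻¹' s) (f ∘ ℓ) := hf.comp_affineMap ℓ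
  have hderiv : HasDerivAt (f ∘ ℓ) (f' (y - x)) 0 :=
    hf'.comp_hasDerivAt_of_eq 0 AffineMap.hasDerivAt_lineMap (by simp [ℓ])
  have hℓ0 : ℓ 0 = x := AffineMap.lineMap_apply_zero x y
  have hℓ1 : ℓ 1 = y := AffineMap.lineMap_apply_one x y
  have hslope := hline.le_slope_of_hasDerivAt (show ℓ 0 ∈ s from hℓ0 ▸ hx)
    (show ℓ 1 ∈ s from hℓ1 ▸ hy) zero_lt_one hderiv
  rw [slope_def_field] at hslope
  simp only [Function.comp_apply, hℓ0, hℓ1, sub_zero, div_one] at hslope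
  linarith

variable {F : Type*} [NormedAddCommGroup F] [InnerProductSpace ℝ F] [CompleteSpace F]
  {s : Set F} {f : F → ℝ} {x y gx gy : F}

theorem add_inner_sub_le_of_hasGradientAt (hf : ConvexOn ℝ s f) (hx : x ∈ s) (hy : y ∈ s)
    (hgx : HasGradientAt f gx x) : f x + ⟪gx, y - x⟫ ≤ f y := by
  simpa using hf.add_apply_sub_le_of_hasFDerivAt hx hy (hasGradientAt_iff_hasFDerivAt.mp hgx)

theorem inner_sub_sub_nonneg_of_hasGradientAt (hf : ConvexOn ℝ s f) (hx : x ∈ s) (hy : y ∈ s)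
    (hgx : HasGradientAt f gx x) (hgy : HasGradientAt f gy y) : 0 ≤ ⟪gy - gx, y - x⟫ := by
  have hxy := hf.add_inner_sub_le_of_hasGradientAt hx hy hgx
  have hyx := hf.add_inner_sub_le_of_hasGradientAt hy hx hgy
  rw [← neg_sub y x, inner_neg_right] at hyx
  rw [inner_sub_left]
  linarith

end ConvexOn

theorem md_loss_decreasing_general {d : ℕ} (ψ L : EuclideanSpace ℝ (Fin d) → ℝ)
    (gψ gL : EuclideanSpace ℝ (Fin d) → EuclideanSpace ℝ (Fin d))
    (hLconv : ConvexOn ℝ Set.univ L)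
    (hψ : ∀ x, HasGradientAt ψ (gψ x) x)
    (hL : ∀ x, HasGradientAt L (gL x) x)
    (η : ℝ) (hη : 0 < η)
    (hconv : ConvexOn ℝ Set.univ (fun x => ψ x - η * L x))
    (wt wt1 : EuclideanSpace ℝ (Fin d))
    (hupdate : gψ wt1 = gψ wt - η • gL wt) :
    L wt1 ≤ L wt := by
  have hgrad : ∀ x, HasGradientAt (fun x => ψ x - η * L x) (gψ x - η • gL x) x :=
    fun x => (hψ x).sub ((hL x).const_mul η)
  have hmono := hconv.inner_sub_sub_nonneg_of_hasGradientAt (Set.mem_univ _) (Set.mem_univ _)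
    (hgrad wt) (hgrad wt1)
  have hgrad_diff : gψ wt1 - η • gL wt1 - (gψ wt - η • gL wt) = -(η • gL wt1) := by
    rw [hupdate]; abel
  rw [hgrad_diff, inner_neg_left, real_inner_smul_left] at hmono
  have hdescent : ⟪gL wt1, wt1 - wt⟫ ≤ 0 := by nlinarith
  have htangent :=
    hLconv.add_inner_sub_le_of_hasGradientAt (Set.mem_univ _) (Set.mem_univ wt) (hL wt1)
  rw [← neg_sub wt1 wt, inner_neg_right] at htangent
  linarith

/-- Under the mirror descent update, if ψ − ηL is convex and L is convex, the loss decreases. -/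
theorem md_loss_decreasing {d : ℕ} (ψ L : EuclideanSpace ℝ (Fin d) → ℝ)
    (gψ gL : EuclideanSpace ℝ (Fin d) → EuclideanSpace ℝ (Fin d))
    (hψconv : StrictConvexOn ℝ Set.univ ψ)
    (hLconv : ConvexOn ℝ Set.univ L)
    (hψ : ∀ x, HasGradientAt ψ (gψ x) x)
    (hL : ∀ x, HasGradientAt L (gL x) x)
    (η : ℝ) (hη : 0 < η)
    (hconv : ConvexOn ℝ Set.univ (fun x => ψ x - η * L x))
    (wt wt1 : EuclideanSpace ℝ (Fin d))
    (hupdate : gψ wt1 = gψ wt - η • gL wt) :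
    L wt1 ≤ L wt :=
  md_loss_decreasing_general ψ L gψ gL hLconv hψ hL η hη hconv wt wt1 hupdate
end

section
/- If ψ : ℝ^d → ℝ is differentiable and β-absolutely homogeneous, then its Bregman divergence is β-absolutely homogeneous: D_ψ(c·w, c·w') = |c|^β D_ψ(w, w') for all c ∈ ℝ and w, w' ∈ ℝ^d. -/
open RealInnerProductSpace

noncomputable def breg {d : ℕ} (f : EuclideanSpace ℝ (Fin d) → ℝ)
    (gf : EuclideanSpace ℝ (Fin d) → EuclideanSpace ℝ (Fin d))
    (x y : EuclideanSpace ℝ (Fin d)) : ℝ :=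
  f x - f y - ⟪gf y, x - y⟫

/-! Differentiating `ψ (c • x) = |c| ^ β * ψ x` in `x` gives `c • ∇ψ (c • x) = |c| ^ β • ∇ψ x`
(for `c = 0` too), so the linear term of `D_ψ (c • w) (c • w')` scales by `|c| ^ β` just like
the values of `ψ`. -/

section Gradient

variable {F : Type*} [NormedAddCommGroup F] [InnerProductSpace ℝ F] [CompleteSpace F]
  {f : F → ℝ} {f' x : F}

theorem HasGradientAt.comp_const_smul (c : ℝ) (hf : HasGradientAt f f' (c • x)) :
    HasGradientAt (fun y => f (c • y)) (c • f') x := by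
  rw [hasGradientAt_iff_hasFDerivAt] at hf ⊢
  refine (hf.comp x ((hasFDerivAt_id x).const_smul c)).congr_fderiv ?_
  ext v
  simp

theorem HasGradientAt.const_mul_s6 (a : ℝ) (hf : HasGradientAt f f' x) :
    HasGradientAt (fun y => a * f y) (a • f') x := by
  rw [hasGradientAt_iff_hasFDerivAt] at hf ⊢
  refine (hf.const_smul a).congr_fderiv ?_
  ext v
  simp

theorem smul_gradient_smul_eq_of_comp_smul_eq_mul {g : F → F}
    (hg : ∀ x, HasGradientAt f (g x) x) {c a : ℝ} (hf : ∀ x, f (c • x) = a * f x) (x : F) :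
    c • g (c • x) = a • g x :=
  ((hg (c • x)).comp_const_smul c).unique (by simpa only [hf] using (hg x).const_mul_s6 a)

end Gradient

theorem breg_smul_of_comp_smul_eq_mul {d : ℕ} {ψ : EuclideanSpace ℝ (Fin d) → ℝ}
    {gψ : EuclideanSpace ℝ (Fin d) → EuclideanSpace ℝ (Fin d)}
    (hψ : ∀ x, HasGradientAt ψ (gψ x) x) {c a : ℝ} (hca : ∀ x, ψ (c • x) = a * ψ x)
    (w w' : EuclideanSpace ℝ (Fin d)) :
    breg ψ gψ (c • w) (c • w') = a * breg ψ gψ w w' := by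
  have hinner : ⟪gψ (c • w'), c • w - c • w'⟫ = a * ⟪gψ w', w - w'⟫ := by
    rw [← smul_sub, real_inner_smul_right, ← real_inner_smul_left,
      smul_gradient_smul_eq_of_comp_smul_eq_mul hψ hca, real_inner_smul_left]
  simp only [breg, hca, hinner]
  ring

theorem breg_homogeneous_general {d : ℕ} (ψ : EuclideanSpace ℝ (Fin d) → ℝ)
    (gψ : EuclideanSpace ℝ (Fin d) → EuclideanSpace ℝ (Fin d))
    (β : ℝ)
    (hψ : ∀ x, HasGradientAt ψ (gψ x) x)
    (hhomog : ∀ (c : ℝ) x, ψ (c • x) = |c| ^ β * ψ x) :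
    ∀ (c : ℝ) (w w' : EuclideanSpace ℝ (Fin d)),
      breg ψ gψ (c • w) (c • w') = |c| ^ β * breg ψ gψ w w' :=
  fun c => breg_smul_of_comp_smul_eq_mul hψ (hhomog c)

/-- The Bregman divergence of a β-absolutely homogeneous potential is β-absolutely homogeneous. -/
theorem breg_homogeneous {d : ℕ} (ψ : EuclideanSpace ℝ (Fin d) → ℝ)
    (gψ : EuclideanSpace ℝ (Fin d) → EuclideanSpace ℝ (Fin d))
    (β : ℝ) (hβ : 1 < β)
    (hψ : ∀ x, HasGradientAt ψ (gψ x) x)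
    (hhomog : ∀ (c : ℝ) x, ψ (c • x) = |c| ^ β * ψ x) :
    ∀ (c : ℝ) (w w' : EuclideanSpace ℝ (Fin d)),
      breg ψ gψ (c • w) (c • w') = |c| ^ β * breg ψ gψ w w' :=
  breg_homogeneous_general ψ gψ β hψ hhomog
end

section
/- Let ψ be differentiable, β-absolutely homogeneous, convex, positive definite. For any w ∈ ℝ^d and any v with ‖v‖_ψ = ‖w‖_ψ, we have |⟨∇ψ(w), v⟩| ≤ ⟨∇ψ(w), w⟩ = β·ψ(w). -/
/-!
Differentiating `t ↦ ψ (t • w) = t ^ β ψ w` at `t = 1` gives Euler's identity `⟪∇ψ w, w⟫ = β ψ w`.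
The gauge of a `β`-homogeneous `ψ` is `ψ ^ β⁻¹`, so `‖v‖_ψ = ‖w‖_ψ` means `ψ v = ψ w = ψ (-v)`.
The supporting hyperplane of the convex `ψ` at `w` then gives `⟪∇ψ w, ±v - w⟫ ≤ ψ (±v) - ψ w = 0`.
-/

open RealInnerProductSpace

theorem sInf_rpow_homogeneous_sublevel_eq {E : Type*} [SMul ℝ E] {f : E → ℝ} {x : E} {β : ℝ}
    (hβ : 0 < β) (hx : 0 ≤ f x)
    (hhomog : ∀ c : ℝ, 0 < c → f (c • x) = c ^ β * f x) :
    sInf {c : ℝ | 0 < c ∧ f (c⁻¹ • x) ≤ 1} = f x ^ β⁻¹ := by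
  have hset : {c : ℝ | 0 < c ∧ f (c⁻¹ • x) ≤ 1} = Set.Ioi 0 ∩ Set.Ici (f x ^ β⁻¹) := by
    ext c
    simp only [Set.mem_ofPred_eq, Set.mem_inter_iff, Set.mem_Ioi, Set.mem_Ici, and_congr_right_iff]
    intro hc
    rw [hhomog _ (inv_pos.mpr hc), Real.inv_rpow hc.le,
      inv_mul_le_iff₀ (Real.rpow_pos_of_pos hc β), mul_one,
      Real.rpow_inv_le_iff_of_pos hx hc.le hβ]
  rw [hset]
  rcases (Real.rpow_nonneg hx β⁻¹).eq_or_lt with h0 | h0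
  · rw [← h0, Set.inter_eq_left.mpr Set.Ioi_subset_Ici_self, csInf_Ioi]
  · rw [Set.inter_eq_right.mpr (Set.Ici_subset_Ioi.mpr h0), csInf_Ici]

section

variable {E : Type*} [NormedAddCommGroup E] [NormedSpace ℝ E] {f : E → ℝ} {f' : E →L[ℝ] ℝ} {x : E}

theorem ConvexOn.le_sub_of_hasFDerivAt (hf : ConvexOn ℝ Set.univ f) (hx : HasFDerivAt f f' x)
    (y : E) : f' (y - x) ≤ f y - f x := by
  let ℓ : ℝ →ᵃ[ℝ] E := AffineMap.lineMap x y
  have hx' : HasFDerivAt f f' (ℓ 0) := by rwa [AffineMap.lineMap_apply_zero]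
  have hderiv : HasDerivAt (f ∘ ℓ) (f' (y - x)) 0 :=
    hx'.comp_hasDerivAt 0 AffineMap.hasDerivAt_lineMap
  have hconv : ConvexOn ℝ Set.univ (f ∘ ℓ) := by simpa using hf.comp_affineMap ℓ
  simpa [slope, ℓ, AffineMap.lineMap_apply_zero, AffineMap.lineMap_apply_one] using
    hconv.le_slope_of_hasDerivAt (Set.mem_univ 0) (Set.mem_univ 1) one_pos hderiv

theorem HasFDerivAt.apply_self_eq_mul_of_rpow_homogeneous {β : ℝ}
    (hhomog : ∀ c : ℝ, 0 < c → f (c • x) = c ^ β * f x) (hx : HasFDerivAt f f' x) :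
    f' x = β * f x := by
  have hchain : HasDerivAt (fun t : ℝ => f (t • x)) (f' x) 1 := by
    have hsmul : HasDerivAt (fun t : ℝ => t • x) x 1 := by
      simpa using (hasDerivAt_id (1 : ℝ)).smul_const x
    have hx' : HasFDerivAt f f' ((1 : ℝ) • x) := by simpa using hx
    exact hx'.comp_hasDerivAt 1 hsmul
  have hpow : HasDerivAt (fun t : ℝ => t ^ β * f x) (β * f x) 1 := by
    simpa using ((Real.hasDerivAt_rpow_const (Or.inl one_ne_zero)).mul_const (f x))
  refine hchain.unique (hpow.congr_of_eventuallyEq ?_)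
  filter_upwards [eventually_gt_nhds one_pos] with t ht using hhomog t ht

end

theorem grad_parallel_general {d : ℕ} (ψ : EuclideanSpace ℝ (Fin d) → ℝ)
    (gψ : EuclideanSpace ℝ (Fin d) → EuclideanSpace ℝ (Fin d))
    (β : ℝ) (hβ : 1 < β)
    (hψ : ∀ x, HasGradientAt ψ (gψ x) x)
    (hconv : ConvexOn ℝ Set.univ ψ)
    (hnonneg : ∀ x, 0 ≤ ψ x)
    (hhomog : ∀ (c : ℝ) x, ψ (c • x) = |c| ^ β * ψ x)
    (N : EuclideanSpace ℝ (Fin d) → ℝ)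
    (hN : ∀ w, N w = sInf {c : ℝ | 0 < c ∧ ψ (c⁻¹ • w) ≤ 1})
    (w v : EuclideanSpace ℝ (Fin d)) (hv : N v = N w) :
    |⟪gψ w, v⟫| ≤ ⟪gψ w, w⟫ ∧ ⟪gψ w, w⟫ = β * ψ w := by
  have hβ0 : 0 < β := one_pos.trans hβ
  have hhomog_pos : ∀ x, ∀ c : ℝ, 0 < c → ψ (c • x) = c ^ β * ψ x := fun x c hc => by
    rw [hhomog, abs_of_pos hc]
  have hN_eq : ∀ x, N x = ψ x ^ β⁻¹ := fun x => by
    rw [hN, sInf_rpow_homogeneous_sublevel_eq hβ0 (hnonneg x) (hhomog_pos x)]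
  have hψv : ψ v = ψ w := by
    rwa [hN_eq, hN_eq, Real.rpow_left_inj (hnonneg v) (hnonneg w) (inv_ne_zero hβ0.ne')] at hv
  have hψneg : ψ (-v) = ψ v := by simpa using hhomog (-1) v
  have hsupport : ∀ y, ψ y = ψ w → ⟪gψ w, y⟫ ≤ ⟪gψ w, w⟫ := fun y hy => by
    have := hconv.le_sub_of_hasFDerivAt (hψ w).hasFDerivAt y
    rw [InnerProductSpace.toDual_apply_apply, inner_sub_right, hy] at this
    linarith
  refine ⟨abs_le.mpr ⟨?_, hsupport v hψv⟩, ?_⟩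
  · have := hsupport (-v) (hψneg.trans hψv)
    rw [inner_neg_right] at this
    linarith
  · simpa using (hψ w).hasFDerivAt.apply_self_eq_mul_of_rpow_homogeneous (hhomog_pos w)

/-- For a homogeneous convex potential, ∇ψ(w) is "parallel" to w:
|⟨∇ψ(w), v⟩| ≤ ⟨∇ψ(w), w⟩ = β·ψ(w) whenever ‖v‖_ψ = ‖w‖_ψ. -/
theorem grad_parallel {d : ℕ} (ψ : EuclideanSpace ℝ (Fin d) → ℝ)
    (gψ : EuclideanSpace ℝ (Fin d) → EuclideanSpace ℝ (Fin d))
    (β : ℝ) (hβ : 1 < β)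
    (hψ : ∀ x, HasGradientAt ψ (gψ x) x)
    (hconv : ConvexOn ℝ Set.univ ψ)
    (hnonneg : ∀ x, 0 ≤ ψ x)
    (hzero : ∀ x, ψ x = 0 ↔ x = 0)
    (hhomog : ∀ (c : ℝ) x, ψ (c • x) = |c| ^ β * ψ x)
    (N : EuclideanSpace ℝ (Fin d) → ℝ)
    (hN : ∀ w, N w = sInf {c : ℝ | 0 < c ∧ ψ (c⁻¹ • w) ≤ 1})
    (w v : EuclideanSpace ℝ (Fin d)) (hv : N v = N w) :
    |⟪gψ w, v⟫| ≤ ⟪gψ w, w⟫ ∧ ⟪gψ w, w⟫ = β * ψ w :=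
  grad_parallel_general ψ gψ β hβ hψ hconv hnonneg hhomog N hN w v hv
end

section
/- For all δ ≥ −1 and β > 1: ((β−1)/β)·((1+δ)^β − 1) ≥ (1+δ)^{β−1} − 1. -/
/-- For all δ ≥ −1 and β > 1: ((β−1)/β)·((1+δ)^β − 1) ≥ (1+δ)^{β−1} − 1. -/
theorem pow_ineq_one (δ β : ℝ) (hδ : -1 ≤ δ) (hβ : 1 < β) :
    (1 + δ) ^ (β - 1) - 1 ≤ (β - 1) / β * ((1 + δ) ^ β - 1) := by
  have hbase : 0 ≤ 1 + δ := by linarith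
  have hβ0 : 0 < β := by linarith
  have hpow : ((1 + δ) ^ β) ^ ((β - 1) / β) = (1 + δ) ^ (β - 1) := by
    rw [← Real.rpow_mul hbase, mul_div_cancel₀ _ hβ0.ne']
  have bernoulli := rpow_one_add_le_one_add_mul_self
    (s := (1 + δ) ^ β - 1) (by linarith [Real.rpow_nonneg hbase β])
    (div_nonneg (by linarith) hβ0.le) (div_le_one_of_le₀ (by linarith : β - 1 ≤ β) hβ0.le)
  rw [add_sub_cancel, hpow] at bernoulli
  linarith
end

section
/- Under mirror descent ∇ψ(w_{t+1}) = ∇ψ(w_t) − η∇L(w_t) with ψ differentiable β-absolutely homogeneous and L convex differentiable, the following inequality holds: (β−1)ψ(w_{t+1}) − (β−1)ψ(w_t) + η·L(w_{t+1}) − η·L(w_t) ≤ ⟨−η∇L(w_t), w_t⟩, provided ψ − ηL is convex. -/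
/-!
Write `φ = ψ - η L`. Convexity of `φ` bounds `φ (w_{t+1}) - φ (w_t)` from below by
`⟪∇ψ(w_t) - η ∇L(w_t), w_{t+1} - w_t⟫`, in which the update rule rewrites
`⟪∇ψ(w_t) - η ∇L(w_t), w_{t+1}⟫` as `⟪∇ψ(w_{t+1}), w_{t+1}⟫`. Euler's relation
`⟪∇ψ(w), w⟫ = β ψ(w)` for the `β`-homogeneous `ψ` then converts every inner product with
`∇ψ` into a value of `ψ`, leaving only `η ⟪∇L(w_t), w_t⟫`.
-/

open RealInnerProductSpace

section

variable {E : Type*} [NormedAddCommGroup E] [NormedSpace ℝ E]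

theorem ConvexOn.add_fderiv_sub_le {s : Set E} {f : E → ℝ} {f' : E →L[ℝ] ℝ} {x y : E}
    (hf : ConvexOn ℝ s f) (hx : x ∈ s) (hy : y ∈ s) (hf' : HasFDerivAt f f' x) :
    f x + f' (y - x) ≤ f y := by
  have hline : ConvexOn ℝ (Set.Icc (0 : ℝ) 1) (f ∘ AffineMap.lineMap x y) :=
    (hf.comp_affineMap _).subset
      (fun t ht => hf.1.lineMap_mem hx hy ht) (convex_Icc 0 1)
  have hderiv : HasDerivAt (f ∘ AffineMap.lineMap x y) (f' (y - x)) (0 : ℝ) :=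
    hf'.comp_hasDerivAt_of_eq 0 AffineMap.hasDerivAt_lineMap (by simp)
  have hslope := hline.le_slope_of_hasDerivAt (by simp) (by simp) one_pos hderiv
  simp only [slope_def_field, Function.comp_apply, AffineMap.lineMap_apply_one,
    AffineMap.lineMap_apply_zero, sub_zero, div_one] at hslope
  linarith

theorem HasFDerivAt.apply_self_eq_mul_of_homogeneous {f : E → ℝ} {f' : E →L[ℝ] ℝ} {x : E}
    {β : ℝ} (hf : ∀ c : ℝ, 0 < c → f (c • x) = c ^ β * f x) (hf' : HasFDerivAt f f' x) :
    f' x = β * f x := by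
  have hray : HasDerivAt (f ∘ fun t : ℝ => t • x) (f' x) 1 := by
    simpa using hf'.comp_hasDerivAt_of_eq (1 : ℝ) ((hasDerivAt_id' (1 : ℝ)).smul_const x)
      (one_smul ℝ x).symm
  have hpow : HasDerivAt (fun t : ℝ => t ^ β * f x) (β * f x) 1 := by
    simpa using (Real.hasDerivAt_rpow_const (x := 1) (p := β) (Or.inl one_ne_zero)).mul_const (f x)
  have hfeq : (f ∘ fun t : ℝ => t • x) =ᶠ[nhds 1] fun t => t ^ β * f x := by
    filter_upwards [eventually_gt_nhds one_pos] with t ht using hf t ht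
  exact hray.unique (hpow.congr_of_eventuallyEq hfeq)

end

theorem md_update_lower_bound_general {d : ℕ} (ψ L : EuclideanSpace ℝ (Fin d) → ℝ)
    (gψ gL : EuclideanSpace ℝ (Fin d) → EuclideanSpace ℝ (Fin d))
    (β : ℝ)
    (hhomog : ∀ (c : ℝ) x, ψ (c • x) = |c| ^ β * ψ x)
    (hψ : ∀ x, HasGradientAt ψ (gψ x) x)
    (hL : ∀ x, HasGradientAt L (gL x) x)
    (η : ℝ)
    (hconv : ConvexOn ℝ Set.univ (fun x => ψ x - η * L x))
    (wt wt1 : EuclideanSpace ℝ (Fin d))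
    (hupdate : gψ wt1 = gψ wt - η • gL wt) :
    (β - 1) * ψ wt1 - (β - 1) * ψ wt + η * L wt1 - η * L wt
      ≤ ⟪-(η • gL wt), wt⟫ := by
  have euler : ∀ x, ⟪gψ x, x⟫ = β * ψ x := fun x => by
    simpa using (hψ x).hasFDerivAt.apply_self_eq_mul_of_homogeneous
      fun c hc => by rw [hhomog, abs_of_pos hc]
  have hsub := hconv.add_fderiv_sub_le (Set.mem_univ wt) (Set.mem_univ wt1)
    ((hψ wt).hasFDerivAt.sub ((hL wt).hasFDerivAt.const_mul η))
  have hgap : ⟪gψ wt, wt1 - wt⟫ - η * ⟪gL wt, wt1 - wt⟫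
      = β * ψ wt1 - β * ψ wt + η * ⟪gL wt, wt⟫ := by
    rw [← euler, ← euler, hupdate]
    simp only [inner_sub_left, inner_sub_right, real_inner_smul_left]
    ring
  simp only [sub_apply, InnerProductSpace.toDual_apply_apply, smul_apply, smul_eq_mul, hgap]
    at hsub
  rw [inner_neg_left, real_inner_smul_left]
  linarith

/-- Lower bound on the mirror descent update (Lemma 12). -/
theorem md_update_lower_bound {d : ℕ} (ψ L : EuclideanSpace ℝ (Fin d) → ℝ)
    (gψ gL : EuclideanSpace ℝ (Fin d) → EuclideanSpace ℝ (Fin d))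
    (β : ℝ) (hβ : 1 < β)
    (hψconv : ConvexOn ℝ Set.univ ψ)
    (hhomog : ∀ (c : ℝ) x, ψ (c • x) = |c| ^ β * ψ x)
    (hLconv : ConvexOn ℝ Set.univ L)
    (hψ : ∀ x, HasGradientAt ψ (gψ x) x)
    (hL : ∀ x, HasGradientAt L (gL x) x)
    (η : ℝ) (hη : 0 < η)
    (hconv : ConvexOn ℝ Set.univ (fun x => ψ x - η * L x))
    (wt wt1 : EuclideanSpace ℝ (Fin d))
    (hupdate : gψ wt1 = gψ wt - η • gL wt) :
    (β - 1) * ψ wt1 - (β - 1) * ψ wt + η * L wt1 - η * L wt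
      ≤ ⟪-(η • gL wt), wt⟫ :=
  md_update_lower_bound_general ψ L gψ gL β hhomog hψ hL η hconv wt wt1 hupdate
end

section
/- For exponential loss L(w) = ∑_{i=1}^n exp(−⟨w, x_i⟩) with separable data, max-margin value γ := max_{‖v‖ ≤ 1} min_i ⟨v, x_i⟩ > 0, and ‖x_i‖_* ≤ C: the dual norm of the gradient satisfies γ·L(w) ≤ ‖∇L(w)‖_* ≤ C·L(w) for all w. -/
open RealInnerProductSpace

/-- For exponential loss with max-margin γ > 0 and bounded data:
γ·L(w) ≤ ‖∇L(w)‖_* ≤ C·L(w). -/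
theorem grad_dual_norm_bounds {d n : ℕ} (hn : 0 < n)
    (x : Fin n → EuclideanSpace ℝ (Fin d))
    (C γ : ℝ) (Nm Nd : EuclideanSpace ℝ (Fin d) → ℝ)
    (hNm0 : ∀ v, 0 ≤ Nm v)
    (hNmzero : ∀ v, Nm v = 0 ↔ v = 0)
    (hNmsmul : ∀ (c : ℝ) v, Nm (c • v) = |c| * Nm v)
    (hNmadd : ∀ v u, Nm (v + u) ≤ Nm v + Nm u)
    (hNd : ∀ y, IsGreatest {r : ℝ | ∃ v, Nm v ≤ 1 ∧ r = ⟪v, y⟫} (Nd y))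
    (hC : ∀ i, Nd (x i) ≤ C)
    (hγ : IsGreatest {r : ℝ | ∃ v, Nm v ≤ 1 ∧
        r = Finset.univ.inf' ⟨⟨0, hn⟩, Finset.mem_univ _⟩ fun i => ⟪v, x i⟫} γ)
    (hγpos : 0 < γ)
    (L : EuclideanSpace ℝ (Fin d) → ℝ)
    (hL : ∀ w, L w = ∑ i, Real.exp (-⟪w, x i⟫))
    (gL : EuclideanSpace ℝ (Fin d) → EuclideanSpace ℝ (Fin d))
    (hgL : ∀ w, gL w = -∑ i, Real.exp (-⟪w, x i⟫) • x i) :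
    ∀ w, γ * L w ≤ Nd (gL w) ∧ Nd (gL w) ≤ C * L w := by
  intro w
  have hNmneg : ∀ v, Nm (-v) = Nm v := by
    intro v
    have := hNmsmul (-1) v
    simpa using this
  have hexp : ∀ i : Fin n, (0:ℝ) < Real.exp (-⟪w, x i⟫) := fun i => Real.exp_pos _
  constructor
  · obtain ⟨v, hv, hγeq⟩ := hγ.1
    have hle : ∀ i : Fin n, γ ≤ ⟪v, x i⟫ := by
      intro i
      rw [hγeq]
      exact Finset.inf'_le _ (Finset.mem_univ i)
    have hmemv : Nm (-v) ≤ 1 := by rw [hNmneg]; exact hv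
    have hkey : γ * L w ≤ ⟪-v, gL w⟫ := by
      rw [hgL, hL, inner_neg_neg, inner_sum, Finset.mul_sum]
      apply Finset.sum_le_sum
      intro i _
      rw [real_inner_smul_right]
      rw [mul_comm]
      exact mul_le_mul_of_nonneg_left (hle i) (hexp i).le
    exact hkey.trans ((hNd (gL w)).2 ⟨-v, hmemv, rfl⟩)
  · obtain ⟨v, hv, heq⟩ := (hNd (gL w)).1
    rw [heq, hgL, hL, inner_neg_right, inner_sum, Finset.mul_sum, ← Finset.sum_neg_distrib]
    apply Finset.sum_le_sum
    intro i _
    rw [real_inner_smul_right, neg_mul_eq_mul_neg]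
    have h1 : -⟪v, x i⟫ ≤ Nd (x i) := by
      have : -⟪v, x i⟫ = ⟪-v, x i⟫ := by rw [inner_neg_left]
      rw [this]
      exact (hNd (x i)).2 ⟨-v, by rw [hNmneg]; exact hv, rfl⟩
    calc Real.exp (-⟪w, x i⟫) * -⟪v, x i⟫
        ≤ Real.exp (-⟪w, x i⟫) * Nd (x i) :=
          mul_le_mul_of_nonneg_left h1 (hexp i).le
      _ ≤ Real.exp (-⟪w, x i⟫) * C :=
          mul_le_mul_of_nonneg_left (hC i) (hexp i).le
      _ = C * Real.exp (-⟪w, x i⟫) := mul_comm _ _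
end

section
/- Uniqueness of the generalized maximum-margin direction: if ψ is strictly convex, positive definite, β-absolutely homogeneous, and the data is separable, then the maximizer of min_i y_i⟨x_i, w⟩ over {w : ψ(w) ≤ 1} is unique. -/
open RealInnerProductSpace

/-- Uniqueness of the generalized maximum-margin direction. -/
theorem max_margin_unique {d n : ℕ} (hn : 0 < n)
    (x : Fin n → EuclideanSpace ℝ (Fin d)) (y : Fin n → ℝ)
    (hy : ∀ i, y i = 1 ∨ y i = -1)
    (ψ : EuclideanSpace ℝ (Fin d) → ℝ) (β : ℝ) (hβ : 1 < β)
    (hconv : StrictConvexOn ℝ Set.univ ψ)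
    (hnonneg : ∀ v, 0 ≤ ψ v)
    (hzero : ∀ v, ψ v = 0 ↔ v = 0)
    (hhomog : ∀ (c : ℝ) v, ψ (c • v) = |c| ^ β * ψ v)
    (hsep : ∃ w, ∀ i, 0 < y i * ⟪x i, w⟫)
    (margin : EuclideanSpace ℝ (Fin d) → ℝ)
    (hmargin : ∀ w, margin w =
      Finset.univ.inf' ⟨⟨0, hn⟩, Finset.mem_univ _⟩ fun i => y i * ⟪x i, w⟫)
    (u₁ u₂ : EuclideanSpace ℝ (Fin d))
    (hu₁ : ψ u₁ ≤ 1) (hu₂ : ψ u₂ ≤ 1)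
    (hmax₁ : ∀ w, ψ w ≤ 1 → margin w ≤ margin u₁)
    (hmax₂ : ∀ w, ψ w ≤ 1 → margin w ≤ margin u₂) :
    u₁ = u₂ := by
  classical
  have hne : (Finset.univ : Finset (Fin n)).Nonempty := ⟨⟨0, hn⟩, Finset.mem_univ _⟩
  -- margin lower bound against pointwise values
  have hmargin_le : ∀ w i, margin w ≤ y i * ⟪x i, w⟫ := by
    intro w i
    rw [hmargin]
    exact Finset.inf'_le _ (Finset.mem_univ i)
  have hle_margin : ∀ (w) (c : ℝ), (∀ i, c ≤ y i * ⟪x i, w⟫) → c ≤ margin w := by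
    intro w c h
    rw [hmargin]
    exact Finset.le_inf' _ _ fun i _ => h i
  -- scaling of margin
  have hscale : ∀ (c : ℝ) (w : EuclideanSpace ℝ (Fin d)), 0 ≤ c →
      margin (c • w) = c * margin w := by
    intro c w hc
    apply le_antisymm
    · obtain ⟨j, _, hj⟩ := Finset.exists_mem_eq_inf' hne fun i => y i * ⟪x i, w⟫
      have h1 : margin (c • w) ≤ y j * ⟪x j, c • w⟫ := hmargin_le _ j
      have h2 : y j * ⟪x j, c • w⟫ = c * (y j * ⟪x j, w⟫) := by
        rw [real_inner_smul_right]; ring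
      rw [h2] at h1
      calc margin (c • w) ≤ c * (y j * ⟪x j, w⟫) := h1
        _ = c * margin w := by rw [hmargin, hj]
    · apply hle_margin
      intro i
      have := hmargin_le w i
      have h2 : y i * ⟪x i, c • w⟫ = c * (y i * ⟪x i, w⟫) := by
        rw [real_inner_smul_right]; ring
      rw [h2]
      exact mul_le_mul_of_nonneg_left this hc
  -- positivity of the optimal margin
  obtain ⟨w, hw⟩ := hsep
  have hwne : w ≠ 0 := by
    intro h
    have := hw ⟨0, hn⟩
    simp [h, inner_zero_right] at this
  have hψw : 0 < ψ w := lt_of_le_of_ne (hnonneg w) (fun h => hwne ((hzero w).mp h.symm))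
  set t : ℝ := (ψ w) ^ (-(1 / β)) with ht
  have htpos : 0 < t := Real.rpow_pos_of_pos hψw _
  have hβ0 : β ≠ 0 := by linarith
  have hexp : (-(1 / β)) * β = -1 := by field_simp
  have hψtw : ψ (t • w) = 1 := by
    rw [hhomog, abs_of_pos htpos, ht, ← Real.rpow_mul hψw.le, hexp,
      Real.rpow_neg_one]
    exact inv_mul_cancel₀ hψw.ne'
  have hmw : 0 < margin w := by
    rw [hmargin]
    exact (Finset.lt_inf'_iff hne).mpr fun i _ => hw i
  have hM : 0 < margin u₁ := by
    have h1 : margin (t • w) ≤ margin u₁ := hmax₁ _ (le_of_eq hψtw)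
    have h2 : margin (t • w) = t * margin w := hscale t w htpos.le
    nlinarith
  have hMeq : margin u₂ = margin u₁ :=
    le_antisymm (hmax₁ u₂ hu₂) (hmax₂ u₁ hu₁)
  -- suppose u₁ ≠ u₂
  by_contra hne12
  set m : EuclideanSpace ℝ (Fin d) := (1/2 : ℝ) • u₁ + (1/2 : ℝ) • u₂ with hm
  have hmarm : margin u₁ ≤ margin m := by
    apply hle_margin
    intro i
    have e : y i * ⟪x i, m⟫ = (1/2) * (y i * ⟪x i, u₁⟫) + (1/2) * (y i * ⟪x i, u₂⟫) := by
      rw [hm, inner_add_right, real_inner_smul_right, real_inner_smul_right]; ring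
    have h1 := hmargin_le u₁ i
    have h2 := hmargin_le u₂ i
    rw [e]
    nlinarith [hMeq]
  have hψm : ψ m < 1 := by
    have := hconv.2 (Set.mem_univ u₁) (Set.mem_univ u₂) hne12
      (by norm_num : (0:ℝ) < 1/2) (by norm_num : (0:ℝ) < 1/2) (by norm_num)
    calc ψ m < (1/2) * ψ u₁ + (1/2) * ψ u₂ := by rw [hm]; exact this
      _ ≤ 1 := by linarith
  have hmne : m ≠ 0 := by
    intro h
    have h0 : margin m ≤ 0 := by
      calc margin m ≤ y ⟨0, hn⟩ * ⟪x ⟨0, hn⟩, m⟫ := hmargin_le m ⟨0, hn⟩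
        _ = 0 := by rw [h, inner_zero_right, mul_zero]
    linarith
  have hψmpos : 0 < ψ m := lt_of_le_of_ne (hnonneg m) (fun h => hmne ((hzero m).mp h.symm))
  set c : ℝ := (ψ m) ^ (-(1 / β)) with hc
  have hcpos : 0 < c := Real.rpow_pos_of_pos hψmpos _
  have hc1 : 1 < c := by
    rw [hc]
    apply Real.one_lt_rpow_iff_of_pos hψmpos |>.mpr
    right
    constructor
    · exact hψm
    · have : 0 < 1/β := by positivity
      linarith
  have hψcm : ψ (c • m) = 1 := by
    rw [hhomog, abs_of_pos hcpos, hc, ← Real.rpow_mul hψmpos.le, hexp,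
      Real.rpow_neg_one]
    exact inv_mul_cancel₀ hψmpos.ne'
  have hfinal : margin (c • m) ≤ margin u₁ := hmax₁ _ (le_of_eq hψcm)
  rw [hscale c m hcpos.le] at hfinal
  nlinarith
end

section
/- If the regularized direction w̄ := lim_{B→∞} argmin_{‖w‖_ψ ≤ B} L(w) / B exists and L is a strictly decreasing function of the margins (L(w) = ∑_i ℓ(y_i⟨x_i, w⟩) with ℓ strictly decreasing), then for every α > 0 there exists r_α such that for all w with ‖w‖_ψ > r_α: L((1+α)‖w‖_ψ · w̄) ≤ L(w). -/
open RealInnerProductSpace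

/-- If the regularized direction exists, then beyond some radius r_α, scaling the
regularized direction by (1+α)‖w‖_ψ achieves no larger loss than w. -/
theorem reg_dir_loss_bound {d n : ℕ} (hn : 0 < n)
    (x : Fin n → EuclideanSpace ℝ (Fin d)) (y : Fin n → ℝ)
    (hy : ∀ i, y i = 1 ∨ y i = -1)
    (Nψ : EuclideanSpace ℝ (Fin d) → ℝ)
    (hN0 : ∀ v, 0 ≤ Nψ v)
    (hNzero : ∀ v, Nψ v = 0 ↔ v = 0)
    (hNsmul : ∀ (c : ℝ) v, Nψ (c • v) = |c| * Nψ v)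
    (hNadd : ∀ v u, Nψ (v + u) ≤ Nψ v + Nψ u)
    (C : ℝ) (hdual : ∀ i v, |⟪x i, v⟫| ≤ C * Nψ v)
    (ℓ : ℝ → ℝ) (hℓ : StrictAnti ℓ)
    (L : EuclideanSpace ℝ (Fin d) → ℝ)
    (hL : ∀ w, L w = ∑ i, ℓ (y i * ⟪x i, w⟫))
    (wbar : EuclideanSpace ℝ (Fin d))
    (hmargin : 0 < Finset.univ.inf' ⟨⟨0, hn⟩, Finset.mem_univ _⟩
        fun i => y i * ⟪x i, wbar⟫)
    (path : ℝ → EuclideanSpace ℝ (Fin d))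
    (hpath : ∀ B, 0 < B → Nψ (path B) ≤ B ∧ ∀ w, Nψ w ≤ B → L (path B) ≤ L w)
    (hlim : Filter.Tendsto (fun B => B⁻¹ • path B) Filter.atTop (nhds wbar)) :
    ∀ α > (0 : ℝ), ∃ r : ℝ, ∀ w, r < Nψ w →
      L (((1 + α) * Nψ w) • wbar) ≤ L w := by
  intro α hα
  have hγle : ∀ i, Finset.univ.inf' ⟨⟨0, hn⟩, Finset.mem_univ _⟩
      (fun i => y i * ⟪x i, wbar⟫) ≤ y i * ⟪x i, wbar⟫ :=
    fun i => Finset.inf'_le _ (Finset.mem_univ i)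
  have hmpos : ∀ i, 0 < y i * ⟪x i, wbar⟫ := fun i => lt_of_lt_of_le hmargin (hγle i)
  have htend : ∀ i : Fin n, Filter.Tendsto (fun B => y i * ⟪x i, B⁻¹ • path B⟫)
      Filter.atTop (nhds (y i * ⟪x i, wbar⟫)) := by
    intro i
    exact Filter.Tendsto.const_mul _
      (((continuous_const.inner continuous_id).tendsto wbar).comp hlim)
  have hev : ∀ᶠ B in Filter.atTop, ∀ i : Fin n,
      y i * ⟪x i, B⁻¹ • path B⟫ < (1 + α) * (y i * ⟪x i, wbar⟫) := by
    rw [Filter.eventually_all]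
    intro i
    have hlt : y i * ⟪x i, wbar⟫ < (1 + α) * (y i * ⟪x i, wbar⟫) := by
      nlinarith [hmpos i]
    exact (htend i).eventually_lt_const hlt
  obtain ⟨r0, hr0⟩ := Filter.eventually_atTop.mp hev
  refine ⟨max r0 1, fun w hw => ?_⟩
  set s := Nψ w with hs
  have hs1 : (1 : ℝ) < s := lt_of_le_of_lt (le_max_right r0 1) hw
  have hspos : 0 < s := lt_trans one_pos hs1
  have hsr0 : r0 ≤ s := le_of_lt (lt_of_le_of_lt (le_max_left r0 1) hw)
  have key : ∀ i : Fin n, y i * ⟪x i, path s⟫ < (1 + α) * s * (y i * ⟪x i, wbar⟫) := by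
    intro i
    have h1 := hr0 s hsr0 i
    have h2 : ⟪x i, s⁻¹ • path s⟫ = s⁻¹ * ⟪x i, path s⟫ := real_inner_smul_right _ _ _
    have h3 : y i * (s⁻¹ * ⟪x i, path s⟫) < (1 + α) * (y i * ⟪x i, wbar⟫) := by
      rw [← h2]; exact h1
    have h4 := mul_lt_mul_of_pos_left h3 hspos
    have hne : s ≠ 0 := ne_of_gt hspos
    calc y i * ⟪x i, path s⟫ = s * (y i * (s⁻¹ * ⟪x i, path s⟫)) := by
          field_simp
      _ < s * ((1 + α) * (y i * ⟪x i, wbar⟫)) := h4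
      _ = (1 + α) * s * (y i * ⟪x i, wbar⟫) := by ring
  have hLle : L (((1 + α) * s) • wbar) ≤ L (path s) := by
    rw [hL, hL]
    apply Finset.sum_le_sum
    intro i _
    have : y i * ⟪x i, ((1 + α) * s) • wbar⟫ = (1 + α) * s * (y i * ⟪x i, wbar⟫) := by
      rw [real_inner_smul_right]; ring
    rw [this]
    exact hℓ.antitone (le_of_lt (key i))
  have hopt := hpath s hspos
  exact le_trans hLle (hopt.2 w (le_of_eq hs.symm))
end
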